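/- arXiv:1005.3062 — 3 statements merged into one kernel-verified Lean document; each statement's English description precedes it below -/
import Mathlib

section
/- Let Y be a finite type, let q0, q1 : Y → ℝ be probability mass functions on Y, let c ∈ ℝ, and let V : ℝ → ℝ be concave on [0,1]. Then the function G : ℝ → ℝ defined by G(π) = c + Σ_{y∈Y} g_{q0(y), q1(y), V}(π) is concave on [0,1]. -/
/-- A function `f : ℝ → ℝ` is concave on `[0,1]`: for all `x, y ∈ [0,1]` and `t ∈ [0,1]`,
`f (t·x + (1−t)·y) ≥ t·f x + (1−t)·f y`. -/
def ConcaveOnUnit (f : ℝ → ℝ) : Prop :=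
  ∀ x ∈ Set.Icc (0:ℝ) 1, ∀ y ∈ Set.Icc (0:ℝ) 1, ∀ t ∈ Set.Icc (0:ℝ) 1,
    t * f x + (1 - t) * f y ≤ f (t * x + (1 - t) * y)

/-- `g_{a,b,V}(π) = (π·a + (1−π)·b) · V (π·a / (π·a + (1−π)·b))` when
`π·a + (1−π)·b > 0`, and `0` otherwise. -/
noncomputable def gFun (a b : ℝ) (V : ℝ → ℝ) (π : ℝ) : ℝ :=
  if 0 < π * a + (1 - π) * b then
    (π * a + (1 - π) * b) * V (π * a / (π * a + (1 - π) * b))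
  else 0

noncomputable def uFun (a b : ℝ) (π : ℝ) : ℝ :=
  if 0 < π * a + (1 - π) * b then π * a / (π * a + (1 - π) * b) else 0

lemma L_nonneg {a b π : ℝ} (ha : 0 ≤ a) (hb : 0 ≤ b) (hπ : π ∈ Set.Icc (0:ℝ) 1) :
    0 ≤ π * a + (1 - π) * b :=
  add_nonneg (mul_nonneg hπ.1 ha) (mul_nonneg (by linarith [hπ.2]) hb)

lemma pa_nonneg {a b : ℝ} (ha : 0 ≤ a) {π : ℝ} (hπ : π ∈ Set.Icc (0:ℝ) 1) :
    0 ≤ π * a := mul_nonneg hπ.1 ha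

lemma pa_le_L {a b π : ℝ} (hb : 0 ≤ b) (hπ : π ∈ Set.Icc (0:ℝ) 1) :
    π * a ≤ π * a + (1 - π) * b :=
  le_add_of_nonneg_right (mul_nonneg (by linarith [hπ.2]) hb)

lemma gFun_eq (a b : ℝ) (ha : 0 ≤ a) (hb : 0 ≤ b) (V : ℝ → ℝ) {π : ℝ}
    (hπ : π ∈ Set.Icc (0:ℝ) 1) :
    gFun a b V π = (π * a + (1 - π) * b) * V (uFun a b π) := by
  unfold gFun uFun
  split
  · rfl
  · rename_i h
    have : π * a + (1 - π) * b = 0 := le_antisymm (not_lt.mp h) (L_nonneg ha hb hπ)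
    rw [this, zero_mul]

lemma uFun_mem (a b : ℝ) (ha : 0 ≤ a) (hb : 0 ≤ b) {π : ℝ}
    (hπ : π ∈ Set.Icc (0:ℝ) 1) : uFun a b π ∈ Set.Icc (0:ℝ) 1 := by
  unfold uFun
  split
  · rename_i h
    exact ⟨div_nonneg (pa_nonneg (b := b) ha hπ) h.le, (div_le_one h).mpr (pa_le_L hb hπ)⟩
  · exact ⟨le_refl 0, zero_le_one⟩

lemma L_mul_uFun (a b : ℝ) (ha : 0 ≤ a) (hb : 0 ≤ b) {π : ℝ}
    (hπ : π ∈ Set.Icc (0:ℝ) 1) :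
    (π * a + (1 - π) * b) * uFun a b π = π * a := by
  unfold uFun
  split
  · rename_i h
    field_simp
  · rename_i h
    have hL : π * a + (1 - π) * b = 0 := le_antisymm (not_lt.mp h) (L_nonneg ha hb hπ)
    have : π * a = 0 := le_antisymm (by linarith [pa_le_L (a := a) hb hπ]) (pa_nonneg (b := b) ha hπ)
    rw [this, mul_zero]

lemma gFun_concave (a b : ℝ) (ha : 0 ≤ a) (hb : 0 ≤ b) {V : ℝ → ℝ}
    (hV : ConcaveOnUnit V) : ConcaveOnUnit (gFun a b V) := by
  intro x hx y hy t ht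
  obtain ⟨ht0, ht1⟩ := ht
  have hz : t * x + (1 - t) * y ∈ Set.Icc (0:ℝ) 1 := by
    constructor
    · exact add_nonneg (mul_nonneg ht0 hx.1) (mul_nonneg (by linarith) hy.1)
    · nlinarith [hx.2, hy.2, hx.1, hy.1]
  set z := t * x + (1 - t) * y with hzdef
  set Lx := x * a + (1 - x) * b with hLxdef
  set Ly := y * a + (1 - y) * b with hLydef
  set Lz := z * a + (1 - z) * b with hLzdef
  have hLxnn : 0 ≤ Lx := L_nonneg ha hb hx
  have hLynn : 0 ≤ Ly := L_nonneg ha hb hy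
  have hLcomb : Lz = t * Lx + (1 - t) * Ly := by rw [hLzdef, hLxdef, hLydef, hzdef]; ring
  rw [gFun_eq a b ha hb V hx, gFun_eq a b ha hb V hy, gFun_eq a b ha hb V hz]
  by_cases hLz : 0 < Lz
  · -- s = t*Lx/Lz
    set ux := uFun a b x with hux
    set uy := uFun a b y with huy
    set s := t * Lx / Lz with hsdef
    have hs0 : 0 ≤ s := div_nonneg (mul_nonneg ht0 hLxnn) hLz.le
    have hs1 : s ≤ 1 := by
      rw [hsdef, div_le_one hLz]
      nlinarith [mul_nonneg (sub_nonneg.mpr ht1) hLynn]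
    have hLzs : Lz * s = t * Lx := by
      rw [hsdef]; field_simp
    have hLzs' : Lz * (1 - s) = (1 - t) * Ly := by
      have : Lz * (1 - s) = Lz - Lz * s := by ring
      rw [this, hLzs, hLcomb]; ring
    have huz : uFun a b z = s * ux + (1 - s) * uy := by
      have h1 : Lz * uFun a b z = z * a := L_mul_uFun a b ha hb hz
      have h2 : Lz * (s * ux + (1 - s) * uy) = z * a := by
        have e1 : Lz * (s * ux + (1 - s) * uy) = (Lz * s) * ux + (Lz * (1 - s)) * uy := by
          ring
        rw [e1, hLzs, hLzs']
        have e2 : t * Lx * ux = t * (Lx * ux) := by ring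
        have e3 : (1 - t) * Ly * uy = (1 - t) * (Ly * uy) := by ring
        rw [e2, e3, L_mul_uFun a b ha hb hx, L_mul_uFun a b ha hb hy, hzdef]
        ring
      exact mul_left_cancel₀ (ne_of_gt hLz) (h1.trans h2.symm)
    rw [huz]
    have hVineq := hV ux (uFun_mem a b ha hb hx) uy (uFun_mem a b ha hb hy) s ⟨hs0, hs1⟩
    have := mul_le_mul_of_nonneg_left hVineq hLz.le
    calc t * (Lx * V ux) + (1 - t) * (Ly * V uy)
        = (Lz * s) * V ux + (Lz * (1 - s)) * V uy := by rw [hLzs, hLzs']; ring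
      _ = Lz * (s * V ux + (1 - s) * V uy) := by ring
      _ ≤ Lz * V (s * ux + (1 - s) * uy) := this
  · have hLz0 : Lz = 0 := le_antisymm (not_lt.mp hLz) (L_nonneg ha hb hz)
    have htLx : t * Lx = 0 := by
      nlinarith [mul_nonneg ht0 hLxnn, mul_nonneg (sub_nonneg.mpr ht1) hLynn]
    have htLy : (1 - t) * Ly = 0 := by
      nlinarith [mul_nonneg ht0 hLxnn, mul_nonneg (sub_nonneg.mpr ht1) hLynn]
    calc t * (Lx * V (uFun a b x)) + (1 - t) * (Ly * V (uFun a b y))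
        = (t * Lx) * V (uFun a b x) + ((1 - t) * Ly) * V (uFun a b y) := by ring
      _ = 0 := by rw [htLx, htLy]; ring
      _ ≤ Lz * V (uFun a b z) := by rw [hLz0]; simp

/-- If `q0, q1` are probability mass functions on a finite type `Y`, `c ∈ ℝ`, and `V` is
concave on `[0,1]`, then `G(π) = c + Σ_y g_{q0 y, q1 y, V}(π)` is concave on `[0,1]`. -/
theorem continuation_value_concaveOnUnit
    (Y : Type) [Fintype Y]
    (q0 q1 : Y → ℝ)
    (hq0 : (∀ y, 0 ≤ q0 y) ∧ ∑ y : Y, q0 y = 1)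
    (hq1 : (∀ y, 0 ≤ q1 y) ∧ ∑ y : Y, q1 y = 1)
    (c : ℝ) (V : ℝ → ℝ) (hV : ConcaveOnUnit V) :
    ConcaveOnUnit (fun π => c + ∑ y : Y, gFun (q0 y) (q1 y) V π) := by
  intro x hx y hy t ht
  simp only
  have key : ∀ w : Y, t * gFun (q0 w) (q1 w) V x + (1 - t) * gFun (q0 w) (q1 w) V y
      ≤ gFun (q0 w) (q1 w) V (t * x + (1 - t) * y) := fun w =>
    gFun_concave (q0 w) (q1 w) (hq0.1 w) (hq1.1 w) hV x hx y hy t ht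
  have hsum := Finset.sum_le_sum (s := Finset.univ) (fun w _ => key w)
  simp only [Finset.sum_add_distrib, ← Finset.mul_sum] at hsum
  linarith
end

section
/- (Theorem 2, four-threshold structure.) Let L0, L1 : ℝ → ℝ be affine with L_i(π) = a_i·π + b_i and a_1 > a_0, and let G : ℝ → ℝ be concave on [0,1]. Set V(π) = min(L0(π), L1(π), G(π)), S_1 = {π ∈ [0,1] : V(π) = L1(π)} and S_0 = {π ∈ [0,1] : V(π) = L0(π)}. Then S_1 and S_0 are convex (intervals), every element of S_1 is less than or equal to every element of S_0, and for every π ∈ [0,1] with π ∉ S_1 ∪ S_0 one has V(π) = G(π). Consequently [0,1] is partitioned into at most five consecutive regions — blank, send 1, blank, send 0, blank — so the optimal rule is characterized by at most four thresholds α ≤ β ≤ δ ≤ θ in [0,1]. -/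
lemma convex_interior_mem {S : Set ℝ} (hc : Convex ℝ S) (hne : S.Nonempty)
    {π : ℝ} (h1 : sInf S < π) (h2 : π < sSup S) : π ∈ S := by
  obtain ⟨x, hx, hxπ⟩ := exists_lt_of_csInf_lt hne h1
  obtain ⟨y, hy, hπy⟩ := exists_lt_of_lt_csSup hne h2
  exact hc.ordConnected.out hx hy ⟨hxπ.le, hπy.le⟩

lemma thresholds_aux (S1 S0 : Set ℝ) (h1 : Convex ℝ S1) (h0 : Convex ℝ S0)
    (hs1 : S1 ⊆ Set.Icc (0:ℝ) 1) (hs0 : S0 ⊆ Set.Icc (0:ℝ) 1)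
    (hord : ∀ x ∈ S1, ∀ y ∈ S0, x ≤ y) :
    ∃ α β δ θ : ℝ, 0 ≤ α ∧ α ≤ β ∧ β ≤ δ ∧ δ ≤ θ ∧ θ ≤ 1 ∧
      ∀ π : ℝ, (α < π → π < β → π ∈ S1) ∧ (δ < π → π < θ → π ∈ S0) ∧
        ((π < α ∨ (β < π ∧ π < δ) ∨ θ < π) → π ∉ S1 ∧ π ∉ S0) := by
  have hbb1 : BddBelow S1 := ⟨0, fun x hx => (hs1 hx).1⟩
  have hba1 : BddAbove S1 := ⟨1, fun x hx => (hs1 hx).2⟩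
  have hbb0 : BddBelow S0 := ⟨0, fun x hx => (hs0 hx).1⟩
  have hba0 : BddAbove S0 := ⟨1, fun x hx => (hs0 hx).2⟩
  by_cases hne1 : S1.Nonempty <;> by_cases hne0 : S0.Nonempty
  · refine ⟨sInf S1, sSup S1, sInf S0, sSup S0,
      le_csInf hne1 fun x hx => (hs1 hx).1,
      csInf_le_csSup hne1 hbb1 hba1,
      csSup_le hne1 fun x hx => le_csInf hne0 fun y hy => hord x hx y hy,
      csInf_le_csSup hne0 hbb0 hba0,
      csSup_le hne0 fun x hx => (hs0 hx).2, fun π => ?_⟩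
    have hβδ : sSup S1 ≤ sInf S0 :=
      csSup_le hne1 fun x hx => le_csInf hne0 fun y hy => hord x hx y hy
    refine ⟨fun ha hb => convex_interior_mem h1 hne1 ha hb,
      fun ha hb => convex_interior_mem h0 hne0 ha hb, ?_⟩
    rintro (h | ⟨hb, hd⟩ | h) <;> constructor <;> intro hm
    · exact absurd (csInf_le hbb1 hm) (by linarith)
    · exact absurd (csInf_le hbb0 hm) (by linarith [csInf_le_csSup hne1 hbb1 hba1])
    · exact absurd (le_csSup hba1 hm) (by linarith)
    · exact absurd (csInf_le hbb0 hm) (by linarith)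
    · exact absurd (le_csSup hba1 hm) (by linarith [csInf_le_csSup hne0 hbb0 hba0])
    · exact absurd (le_csSup hba0 hm) (by linarith)
  · refine ⟨sInf S1, sSup S1, 1, 1,
      le_csInf hne1 fun x hx => (hs1 hx).1,
      csInf_le_csSup hne1 hbb1 hba1,
      csSup_le hne1 fun x hx => (hs1 hx).2, le_refl 1, le_refl 1, fun π => ?_⟩
    refine ⟨fun ha hb => convex_interior_mem h1 hne1 ha hb,
      fun ha hb => absurd ha (by linarith), ?_⟩
    have h0e : π ∉ S0 := fun hm => hne0 ⟨π, hm⟩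
    rintro (h | ⟨hb, hd⟩ | h) <;> refine ⟨fun hm => ?_, h0e⟩
    · exact absurd (csInf_le hbb1 hm) (by linarith)
    · exact absurd (le_csSup hba1 hm) (by linarith)
    · exact absurd ((hs1 hm).2) (by linarith)
  · refine ⟨0, 0, sInf S0, sSup S0, le_refl 0, le_refl 0,
      le_csInf hne0 fun x hx => (hs0 hx).1,
      csInf_le_csSup hne0 hbb0 hba0,
      csSup_le hne0 fun x hx => (hs0 hx).2, fun π => ?_⟩
    have h1e : π ∉ S1 := fun hm => hne1 ⟨π, hm⟩
    refine ⟨fun ha hb => absurd ha (by linarith),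
      fun ha hb => convex_interior_mem h0 hne0 ha hb, ?_⟩
    rintro (h | ⟨hb, hd⟩ | h) <;> refine ⟨h1e, fun hm => ?_⟩
    · exact absurd ((hs0 hm).1) (by linarith)
    · exact absurd (csInf_le hbb0 hm) (by linarith)
    · exact absurd (le_csSup hba0 hm) (by linarith)
  · refine ⟨0, 0, 1, 1, le_refl 0, le_refl 0, zero_le_one, le_refl 1, le_refl 1, fun π => ?_⟩
    exact ⟨fun ha hb => absurd ha (by linarith),
      fun ha hb => absurd ha (by linarith),
      fun _ => ⟨fun hm => hne1 ⟨π, hm⟩, fun hm => hne0 ⟨π, hm⟩⟩⟩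

/-- Theorem 2 (four-threshold structure): with `L0, L1` affine (`L_i(π) = a_i·π + b_i`,
`a_1 > a_0`), `G` concave on `[0,1]`, `V = min(L0, L1, G)`, and
`S_i = {π ∈ [0,1] : V π = L_i π}`, the sets `S_1` and `S_0` are convex (intervals),
every element of `S_1` is ≤ every element of `S_0`, on the complement of `S_1 ∪ S_0`
in `[0,1]` one has `V = G`, and consequently `[0,1]` splits into at most five consecutive
regions (blank, send 1, blank, send 0, blank) described by four thresholds
`α ≤ β ≤ δ ≤ θ` in `[0,1]`. -/
theorem four_threshold_structure
    (a0 b0 a1 b1 : ℝ) (hslope : a0 < a1)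
    (L0 L1 G : ℝ → ℝ)
    (hL0 : ∀ π, L0 π = a0 * π + b0)
    (hL1 : ∀ π, L1 π = a1 * π + b1)
    (hG : ConcaveOnUnit G)
    (V : ℝ → ℝ)
    (hV : ∀ π, V π = min (L0 π) (min (L1 π) (G π)))
    (S1 S0 : Set ℝ)
    (hS1 : S1 = {π : ℝ | π ∈ Set.Icc (0:ℝ) 1 ∧ V π = L1 π})
    (hS0 : S0 = {π : ℝ | π ∈ Set.Icc (0:ℝ) 1 ∧ V π = L0 π}) :
    Convex ℝ S1 ∧ Convex ℝ S0 ∧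
    (∀ x ∈ S1, ∀ y ∈ S0, x ≤ y) ∧
    (∀ π ∈ Set.Icc (0:ℝ) 1, π ∉ S1 ∪ S0 → V π = G π) ∧
    ∃ α β δ θ : ℝ, 0 ≤ α ∧ α ≤ β ∧ β ≤ δ ∧ δ ≤ θ ∧ θ ≤ 1 ∧
      ∀ π ∈ Set.Icc (0:ℝ) 1,
        (α < π → π < β → V π = L1 π) ∧
        (δ < π → π < θ → V π = L0 π) ∧
        ((π < α ∨ (β < π ∧ π < δ) ∨ θ < π) → V π = G π) := by
  subst hS1 hS0
  -- membership characterizations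
  have hmem1 : ∀ π : ℝ, (π ∈ Set.Icc (0:ℝ) 1 ∧ V π = L1 π) ↔
      (π ∈ Set.Icc (0:ℝ) 1 ∧ L1 π ≤ L0 π ∧ L1 π ≤ G π) := by
    intro π
    rw [hV π]
    constructor
    · rintro ⟨hπ, hv⟩
      refine ⟨hπ, ?_, ?_⟩
      · calc L1 π = min (L0 π) (min (L1 π) (G π)) := hv.symm
          _ ≤ L0 π := min_le_left _ _
      · calc L1 π = min (L0 π) (min (L1 π) (G π)) := hv.symm
          _ ≤ min (L1 π) (G π) := min_le_right _ _
          _ ≤ G π := min_le_right _ _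
    · rintro ⟨hπ, h01, h1G⟩
      refine ⟨hπ, ?_⟩
      rw [min_eq_left h1G, min_eq_right h01]
  have hmem0 : ∀ π : ℝ, (π ∈ Set.Icc (0:ℝ) 1 ∧ V π = L0 π) ↔
      (π ∈ Set.Icc (0:ℝ) 1 ∧ L0 π ≤ L1 π ∧ L0 π ≤ G π) := by
    intro π
    rw [hV π]
    constructor
    · rintro ⟨hπ, hv⟩
      refine ⟨hπ, ?_, ?_⟩
      · calc L0 π = min (L0 π) (min (L1 π) (G π)) := hv.symm
          _ ≤ min (L1 π) (G π) := min_le_right _ _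
          _ ≤ L1 π := min_le_left _ _
      · calc L0 π = min (L0 π) (min (L1 π) (G π)) := hv.symm
          _ ≤ min (L1 π) (G π) := min_le_right _ _
          _ ≤ G π := min_le_right _ _
    · rintro ⟨hπ, h01, h0G⟩
      exact ⟨hπ, min_eq_left (le_min h01 h0G)⟩
  -- Convexity of S1
  have hc1 : Convex ℝ {π : ℝ | π ∈ Set.Icc (0:ℝ) 1 ∧ V π = L1 π} := by
    intro x hx y hy a b ha hb hab
    simp only [Set.mem_setOf_eq, smul_eq_mul] at *
    rw [hmem1] at hx hy ⊢
    obtain ⟨hxI, hx01, hxG⟩ := hx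
    obtain ⟨hyI, hy01, hyG⟩ := hy
    have hb' : b = 1 - a := by linarith
    subst hb'
    have haI : a ∈ Set.Icc (0:ℝ) 1 := ⟨ha, by linarith⟩
    refine ⟨convex_Icc (0:ℝ) 1 hxI hyI ha hb hab, ?_, ?_⟩
    · rw [hL0, hL1] at *
      nlinarith [mul_le_mul_of_nonneg_left hx01 ha, mul_le_mul_of_nonneg_left hy01 hb]
    · have hGc := hG x hxI y hyI a haI
      rw [hL1] at *
      nlinarith [mul_le_mul_of_nonneg_left hxG ha, mul_le_mul_of_nonneg_left hyG hb]
  have hc0 : Convex ℝ {π : ℝ | π ∈ Set.Icc (0:ℝ) 1 ∧ V π = L0 π} := by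
    intro x hx y hy a b ha hb hab
    simp only [Set.mem_setOf_eq, smul_eq_mul] at *
    rw [hmem0] at hx hy ⊢
    obtain ⟨hxI, hx01, hxG⟩ := hx
    obtain ⟨hyI, hy01, hyG⟩ := hy
    have hb' : b = 1 - a := by linarith
    subst hb'
    have haI : a ∈ Set.Icc (0:ℝ) 1 := ⟨ha, by linarith⟩
    refine ⟨convex_Icc (0:ℝ) 1 hxI hyI ha hb hab, ?_, ?_⟩
    · rw [hL0, hL1] at *
      nlinarith [mul_le_mul_of_nonneg_left hx01 ha, mul_le_mul_of_nonneg_left hy01 hb]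
    · have hGc := hG x hxI y hyI a haI
      rw [hL0] at *
      nlinarith [mul_le_mul_of_nonneg_left hxG ha, mul_le_mul_of_nonneg_left hyG hb]
  -- ordering
  have hord : ∀ x ∈ {π : ℝ | π ∈ Set.Icc (0:ℝ) 1 ∧ V π = L1 π},
      ∀ y ∈ {π : ℝ | π ∈ Set.Icc (0:ℝ) 1 ∧ V π = L0 π}, x ≤ y := by
    intro x hx y hy
    simp only [Set.mem_setOf_eq] at hx hy
    rw [hmem1] at hx
    rw [hmem0] at hy
    have h1 := hx.2.1
    have h2 := hy.2.1
    rw [hL0, hL1] at h1 h2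
    nlinarith
  -- complement
  have hcomp : ∀ π ∈ Set.Icc (0:ℝ) 1,
      π ∉ {π : ℝ | π ∈ Set.Icc (0:ℝ) 1 ∧ V π = L1 π} ∪
          {π : ℝ | π ∈ Set.Icc (0:ℝ) 1 ∧ V π = L0 π} → V π = G π := by
    intro π hπ hn
    simp only [Set.mem_union, Set.mem_setOf_eq, not_or] at hn
    have h1 : V π ≠ L1 π := fun h => hn.1 ⟨hπ, h⟩
    have h0 : V π ≠ L0 π := fun h => hn.2 ⟨hπ, h⟩
    rw [hV π] at h1 h0 ⊢
    rcases min_cases (L0 π) (min (L1 π) (G π)) with ⟨h, _⟩ | ⟨h, _⟩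
    · exact absurd h h0
    · rw [h] at h1 ⊢
      rcases min_cases (L1 π) (G π) with ⟨h', _⟩ | ⟨h', _⟩
      · exact absurd h' h1
      · exact h'
  refine ⟨hc1, hc0, hord, hcomp, ?_⟩
  have hsub1 : {π : ℝ | π ∈ Set.Icc (0:ℝ) 1 ∧ V π = L1 π} ⊆ Set.Icc (0:ℝ) 1 :=
    fun x hx => hx.1
  have hsub0 : {π : ℝ | π ∈ Set.Icc (0:ℝ) 1 ∧ V π = L0 π} ⊆ Set.Icc (0:ℝ) 1 :=
    fun x hx => hx.1
  obtain ⟨α, β, δ, θ, h1, h2, h3, h4, h5, h6⟩ :=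
    thresholds_aux _ _ hc1 hc0 hsub1 hsub0 hord
  refine ⟨α, β, δ, θ, h1, h2, h3, h4, h5, fun π hπ => ?_⟩
  obtain ⟨k1, k0, kc⟩ := h6 π
  exact ⟨fun ha hb => (k1 ha hb).2, fun ha hb => (k0 ha hb).2,
    fun h => hcomp π hπ (by
      rintro (hm | hm)
      · exact (kc h).1 hm
      · exact (kc h).2 hm)⟩
end

section
/- (Example 1, the non-threshold policy strictly outperforms the best threshold policy.) Let p = 3/5, let c1 > 0, let c2 > 6·c1, and let q ∈ ℝ satisfy 1 − 4·c1/(3·c2) < q ≤ 1. Then p·c2 + (1−p)·c1/2 < p·c1 + p·(1+q)·c2/2. -/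
/-- Example 1: the non-threshold policy strictly outperforms the best threshold policy.
With `p = 3/5`, `c1 > 0`, `c2 > 6·c1`, and `1 − 4·c1/(3·c2) < q ≤ 1`, the expected cost
`p·c2 + (1−p)·c1/2` of the non-threshold policy is strictly less than the expected cost
`p·c1 + p·(1+q)·c2/2` of the best threshold policy. -/
theorem example1_nonthreshold_beats_threshold
    (p q c1 c2 : ℝ)
    (hp : p = 3 / 5)
    (hc1 : 0 < c1)
    (hc2 : 6 * c1 < c2)
    (hqlow : 1 - 4 * c1 / (3 * c2) < q)
    (hqhigh : q ≤ 1) :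
    p * c2 + (1 - p) * c1 / 2 < p * c1 + p * (1 + q) * c2 / 2 := by
  subst hp
  have hc2pos : 0 < c2 := lt_trans (by linarith) hc2
  have h : (1 - q) * (3 * c2) < 4 * c1 := by
    have := (lt_div_iff₀ (by positivity : (0:ℝ) < 3 * c2)).mp (by linarith : 1 - q < 4 * c1 / (3 * c2))
    linarith
  nlinarith
end
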